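/- arXiv:2312.09224 — 9 statements merged into one kernel-verified Lean document; each statement's English description precedes it below -/
import Mathlib

section
/- In the n-th OR-power of the Mycielskian of the complete graph K_n with the top vertex removed, there exists a clique of size n^n such that every vertex of the clique has at least one coordinate belonging to the 'upper level' V(K_n) × {1}. -/
/-- The `t`-th OR-power of a simple graph: vertices are `t`-sequences, two sequences
are adjacent iff they are adjacent in some coordinate. -/
def ORpow {V : Type*} (G : SimpleGraph V) (t : ℕ) : SimpleGraph (Fin t → V) where
  Adj x y := ∃ i, G.Adj (x i) (y i)
  symm := ⟨fun _ _ ⟨i, h⟩ => ⟨i, h.symm⟩⟩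
  loopless := ⟨fun _ ⟨_, h⟩ => G.loopless.irrefl _ h⟩

/-- The Mycielskian of `G` with the top vertex removed: the induced subgraph of `M(G)`
on `V(G) × {0,1}`, where `(v,a)` and `(w,b)` are adjacent iff `vw ∈ E(G)` and at least
one of `a`, `b` is `0` (i.e. `false`). -/
def mycielskianCore {V : Type*} (G : SimpleGraph V) : SimpleGraph (V × Bool) where
  Adj x y := G.Adj x.1 y.1 ∧ (x.2 = false ∨ y.2 = false)
  symm := ⟨fun _ _ h => ⟨h.1.symm, h.2.symm⟩⟩
  loopless := ⟨fun _ h => G.loopless.irrefl _ h.1⟩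

/-- The special index of `f`: the sum of the values of `f` modulo `n`. -/
def sIdx {n : ℕ} (hn : 1 ≤ n) (f : Fin n → Fin n) : Fin n :=
  ⟨(∑ j, (f j).val) % n, Nat.mod_lt _ hn⟩

lemma sIdx_key {n : ℕ} (hn : 1 ≤ n) (f g : Fin n → Fin n) (hfg : f ≠ g) :
    ∃ i, f i ≠ g i ∧ (i ≠ sIdx hn f ∨ i ≠ sIdx hn g) := by
  by_cases hs : sIdx hn f = sIdx hn g
  · -- sums agree mod n; then f and g must differ away from the common index
    by_contra h
    push_neg at h
    set s := sIdx hn f with hsdef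
    have hoff : ∀ i, i ≠ s → f i = g i := by
      intro i hi
      by_contra hne
      exact hi ((h i hne).1)
    -- sums mod n equal
    have hsum : (∑ j, (f j).val) % n = (∑ j, (g j).val) % n := by
      have := congrArg Fin.val hs
      simpa [sIdx, hsdef] using this
    have hsplit : ∀ (u : Fin n → Fin n),
        ∑ j, (u j).val = (u s).val + ∑ j ∈ Finset.univ.erase s, (u j).val := by
      intro u
      exact (Finset.add_sum_erase Finset.univ (fun j => (u j).val) (Finset.mem_univ s)).symm
    have hrest : ∑ j ∈ Finset.univ.erase s, (f j).val
        = ∑ j ∈ Finset.univ.erase s, (g j).val := by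
      apply Finset.sum_congr rfl
      intro j hj
      rw [hoff j (Finset.ne_of_mem_erase hj)]
    rw [hsplit f, hsplit g, hrest] at hsum
    have hmod : (f s).val % n = (g s).val % n :=
      (Nat.ModEq.add_right_cancel' _ (hsum : _ ≡ _ [MOD n]))
    have hvs : (f s).val = (g s).val := by
      rwa [Nat.mod_eq_of_lt (f s).isLt, Nat.mod_eq_of_lt (g s).isLt] at hmod
    have : f = g := by
      funext i
      by_cases hi : i = s
      · subst hi; exact Fin.val_injective hvs
      · exact hoff i hi
    exact hfg this
  · obtain ⟨i, hi⟩ := Function.ne_iff.mp hfg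
    refine ⟨i, hi, ?_⟩
    by_contra h
    push_neg at h
    exact hs (h.1 ▸ h.2 ▸ rfl)

/-- In the `n`-th OR-power of `M(K_n) ∖ {z}` there is a clique of size `n^n`
every vertex of which has a coordinate in the upper level `V(K_n) × {1}`. -/
theorem clique_in_ORpow_mycielskianCore_completeGraph (n : ℕ) (hn : 1 ≤ n) :
    ∃ S : Finset (Fin n → Fin n × Bool),
      (ORpow (mycielskianCore (SimpleGraph.completeGraph (Fin n))) n).IsNClique (n ^ n) S ∧
      ∀ x ∈ S, ∃ i, (x i).2 = true := by
  classical
  set x : (Fin n → Fin n) → (Fin n → Fin n × Bool) :=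
    fun f i => (f i, decide (i = sIdx hn f)) with hx
  have hinj : Function.Injective x := by
    intro f g h
    funext i
    have := congrArg (fun u => (u i).1) h
    simpa [hx] using this
  refine ⟨Finset.univ.image x, ⟨?_, ?_⟩, ?_⟩
  · intro a ha b hb hab
    simp only [Finset.coe_image, Finset.coe_univ, Set.image_univ, Set.mem_range,
      Finset.mem_image, Finset.mem_univ, true_and] at ha hb
    obtain ⟨f, rfl⟩ := ha
    obtain ⟨g, rfl⟩ := hb
    have hfg : f ≠ g := fun h => hab (by rw [h])
    obtain ⟨i, hne, hor⟩ := sIdx_key hn f g hfg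
    refine ⟨i, ?_, ?_⟩
    · simpa [hx, SimpleGraph.completeGraph] using hne
    · rcases hor with h | h
      · left; simp [hx, h]
      · right; simp [hx, h]
  · rw [Finset.card_image_of_injective _ hinj]
    simp
  · intro a ha
    simp only [Finset.mem_image, Finset.mem_univ, true_and] at ha
    obtain ⟨f, rfl⟩ := ha
    exact ⟨sIdx hn f, by simp [hx]⟩
end

section
/- For every n ≥ 1, the clique number of the n-th OR-power of the Mycielskian of K_n satisfies ω([M(K_n)]^n) ≥ n^n + 1. -/
/-- The Mycielskian `M(G)`: vertex set `V(G) × {0,1} ∪ {z}`, with edges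
`{(v,0),(w,i)}` for `{v,w} ∈ E(G)`, `i ∈ {0,1}`, and `{z,(v,1)}` for all `v`. -/
def mycielskian {V : Type*} (G : SimpleGraph V) : SimpleGraph (V × Bool ⊕ Unit) where
  Adj x y :=
    match x, y with
    | Sum.inl (v, a), Sum.inl (w, b) => G.Adj v w ∧ (a = false ∨ b = false)
    | Sum.inl (_, b), Sum.inr _ => b = true
    | Sum.inr _, Sum.inl (_, b) => b = true
    | Sum.inr _, Sum.inr _ => False
  symm := by
    constructor
    rintro (⟨v, a⟩ | ⟨⟩) (⟨w, b⟩ | ⟨⟩) h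
    · exact ⟨h.1.symm, h.2.symm⟩
    · exact h
    · exact h
    · exact h.elim
  loopless := by
    constructor
    rintro (⟨v, a⟩ | ⟨⟩) h
    · exact G.loopless.irrefl v h.1
    · exact h.elim

/-- `ω([M(K_n)]^n) ≥ n^n + 1` for every `n ≥ 1`. -/
theorem cliqueNum_ORpow_mycielskian_completeGraph (n : ℕ) (hn : 1 ≤ n) :
    n ^ n + 1 ≤ (ORpow (mycielskian (SimpleGraph.completeGraph (Fin n))) n).cliqueNum := by
  haveI : NeZero n := ⟨by omega⟩
  set G := ORpow (mycielskian (SimpleGraph.completeGraph (Fin n))) n with hG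
  let σ : (Fin n → Fin n) → Fin n := fun f => ∑ j, f j
  let u : (Fin n → Fin n) → (Fin n → Fin n × Bool ⊕ Unit) :=
    fun f i => Sum.inl (f i, decide (i = σ f))
  let w : Fin n → Fin n × Bool ⊕ Unit := fun _ => Sum.inr ()
  -- key combinatorial lemma
  have key : ∀ f g : Fin n → Fin n, f ≠ g → ∃ i, f i ≠ g i ∧ (¬ i = σ f ∨ ¬ i = σ g) := by
    intro f g hfg
    by_cases hσ : σ f = σ g
    · by_contra hc
      push_neg at hc
      have hagree : ∀ i, i ≠ σ f → f i = g i := by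
        intro i hi
        by_contra h
        exact hi (hc i h).1
      obtain ⟨c, hcne⟩ := Function.ne_iff.mp hfg
      have hc' : c = σ f := (hc c hcne).1
      have hsum : f c + ∑ j ∈ Finset.univ.erase c, f j
          = g c + ∑ j ∈ Finset.univ.erase c, g j := by
        rw [Finset.add_sum_erase _ f (Finset.mem_univ c),
            Finset.add_sum_erase _ g (Finset.mem_univ c)]
        exact hσ
      have htail : ∑ j ∈ Finset.univ.erase c, f j = ∑ j ∈ Finset.univ.erase c, g j := by
        apply Finset.sum_congr rfl
        intro j hj
        exact hagree j (by
          have := Finset.ne_of_mem_erase hj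
          rwa [← hc'])
      rw [htail] at hsum
      exact hcne (add_right_cancel hsum)
    · obtain ⟨c, hcne⟩ := Function.ne_iff.mp hfg
      refine ⟨c, hcne, ?_⟩
      rcases eq_or_ne c (σ f) with h | h
      · exact Or.inr (h ▸ hσ)
      · exact Or.inl h
  have huinj : Function.Injective u := by
    intro f g h
    funext i
    have := congrFun h i
    simpa [u] using congrArg (fun x => x.elim Prod.fst (fun _ => f i)) this
  have hwnot : w ∉ Finset.image u Finset.univ := by
    simp only [Finset.mem_image, Finset.mem_univ, true_and]
    rintro ⟨f, hf⟩
    have := congrFun hf 0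
    simp [u, w] at this
  set s : Finset (Fin n → Fin n × Bool ⊕ Unit) :=
    insert w (Finset.image u Finset.univ) with hs
  have hclique : G.IsClique s := by
    intro x hx y hy hxy
    simp only [hs, Finset.coe_insert, Set.mem_insert_iff, Finset.coe_image,
      Set.mem_image, Finset.mem_coe, Finset.mem_univ] at hx hy
    have adjwu : ∀ f, G.Adj w (u f) := by
      intro f
      refine ⟨σ f, ?_⟩
      show (mycielskian (SimpleGraph.completeGraph (Fin n))).Adj (Sum.inr ()) (Sum.inl (f (σ f), decide (σ f = σ f)))
      simp [mycielskian]
    rcases hx with rfl | ⟨f, -, rfl⟩ <;> rcases hy with rfl | ⟨g, -, rfl⟩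
    · exact absurd rfl hxy
    · exact adjwu g
    · exact (adjwu f).symm
    · have hfg : f ≠ g := fun h => hxy (by rw [h])
      obtain ⟨i, hne, hlev⟩ := key f g hfg
      refine ⟨i, ?_⟩
      show (mycielskian (SimpleGraph.completeGraph (Fin n))).Adj
        (Sum.inl (f i, decide (i = σ f))) (Sum.inl (g i, decide (i = σ g)))
      refine ⟨hne, ?_⟩
      rcases hlev with h | h
      · exact Or.inl (decide_eq_false h)
      · exact Or.inr (decide_eq_false h)
  have hcard : s.card = n ^ n + 1 := by
    rw [hs, Finset.card_insert_of_notMem hwnot,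
      Finset.card_image_of_injective _ huinj, Finset.card_univ]
    simp
  have := SimpleGraph.IsClique.card_le_cliqueNum (G := G) (tc := hclique)
  omega
end

section
/- In the n-th OR-power of the digraph M(T_n)∖{z}, where T_n is the transitive tournament on n vertices, there exists a transitive clique of size n^n every vertex of which has a coordinate in V(T_n)×{1}. -/
/-- The `t`-th OR-power of a digraph (given as an arc relation): there is an arc from
`x` to `y` iff in some coordinate `(x i, y i)` is an arc. -/
def dORpow {V : Type*} (D : V → V → Prop) (t : ℕ) : (Fin t → V) → (Fin t → V) → Prop :=
  fun x y => ∃ i, D (x i) (y i)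

/-- The Mycielskian of a digraph: vertex set `V × {0,1} ∪ {z}`, arcs `((v,0),(w,i))` and
`((v,1),(w,0))` for arcs `(v,w)`, `i ∈ {0,1}`, and arcs `(z,(v,1))` for all `v`. -/
def dMycielskian {V : Type*} (D : V → V → Prop) :
    (V × Bool ⊕ Unit) → (V × Bool ⊕ Unit) → Prop
  | Sum.inl (v, a), Sum.inl (w, b) => D v w ∧ (a = false ∨ b = false)
  | Sum.inr _, Sum.inl (_, b) => b = true
  | _, _ => False

/-- The Mycielskian of a digraph with the top vertex removed (induced on `V × {0,1}`). -/
def dMycielskianCore {V : Type*} (D : V → V → Prop) : (V × Bool) → (V × Bool) → Prop :=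
  fun x y => D x.1 y.1 ∧ (x.2 = false ∨ y.2 = false)

/-- `f` lists a transitive clique of size `m` in the digraph `D`: the vertices are
distinct and every earlier one sends an arc to every later one. -/
def IsTransClique {V : Type*} (D : V → V → Prop) (m : ℕ) (f : Fin m → V) : Prop :=
  Function.Injective f ∧ ∀ i j : Fin m, i < j → D (f i) (f j)

/-- The transitive clique number `ω_tr` of a digraph. -/
noncomputable def transCliqueNum {V : Type*} (D : V → V → Prop) : ℕ :=
  sSup {m | ∃ f : Fin m → V, IsTransClique D m f}

/-- The transitive tournament on `n` vertices. -/
def transTournament (n : ℕ) : Fin n → Fin n → Prop := fun i j => i < j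

/-! Vertices are indexed by tuples `g : Fin n → Fin n`; the vertex of `g` carries `g` in its first
components and is marked (second component `true`) exactly at the coordinate `Σ g mod n`.
Tuples are ordered by their sum, ties broken lexicographically after zeroing the marked coordinate.
If `g` comes before `h` with a smaller sum, some coordinate increases; when the marks of `g` and `h`
coincide the sums differ by a positive multiple of `n`, which no single coordinate can account
for, so some unmarked coordinate increases. If the sums agree, so do the marks, and the first
coordinate where the zeroed tuples differ is unmarked. -/

open Finset Function

theorem exists_isTransClique_comp_of_injective {α β V : Type*} [Fintype α] [LinearOrder β]
    {D : V → V → Prop} {m : ℕ} (hm : Fintype.card α = m) {φ : α → V} (hφ : Injective φ)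
    {k : α → β} (hk : Injective k) (hD : ∀ a b, k a < k b → D (φ a) (φ b)) :
    ∃ f : Fin m → α, IsTransClique D m (φ ∘ f) := by
  let := LinearOrder.lift' k hk
  let e := Fintype.orderIsoFinOfCardEq α hm
  exact ⟨e, hφ.comp e.injective, fun i j hij => hD _ _ (e.strictMono hij)⟩

namespace MycielskiORPower

section ValSum

variable {ι : Type*} [Fintype ι] {n : ℕ}

def valSum (g : ι → Fin n) : ℕ := ∑ c, (g c : ℕ)

theorem exists_ne_lt_of_valSum_lt_of_modEq {g h : ι → Fin n} (hlt : valSum g < valSum h)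
    (hmod : valSum g ≡ valSum h [MOD n]) (c₀ : ι) : ∃ c ≠ c₀, g c < h c := by
  classical
  by_contra! hle
  have hbound : valSum h < valSum g + n :=
    calc valSum h = h c₀ + ∑ c ∈ univ.erase c₀, (h c : ℕ) :=
          (add_sum_erase _ _ (mem_univ c₀)).symm
      _ < n + ∑ c ∈ univ.erase c₀, (g c : ℕ) :=
        add_lt_add_of_lt_of_le (h c₀).isLt (sum_le_sum fun c hc => hle c (ne_of_mem_erase hc))
      _ ≤ n + valSum g := by gcongr; exact sum_le_sum_of_subset (erase_subset _ _)
      _ = valSum g + n := add_comm _ _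
  have := Nat.le_of_dvd (by omega) ((Nat.modEq_iff_dvd' hlt.le).mp hmod)
  omega

theorem eq_of_update_eq_of_valSum_eq [DecidableEq ι] [NeZero n] {g h : ι → Fin n} {s : ι}
    (hu : update g s 0 = update h s 0) (hS : valSum g = valSum h) : g = h := by
  have hoff : ∀ c ≠ s, g c = h c := fun c hc => by
    simpa [update_of_ne hc] using congrFun hu c
  have hrest : ∑ c ∈ univ.erase s, (g c : ℕ) = ∑ c ∈ univ.erase s, (h c : ℕ) :=
    sum_congr rfl fun c hc => by rw [hoff c (ne_of_mem_erase hc)]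
  have hs : (g s : ℕ) = h s := by
    have eg := add_sum_erase _ (fun c => (g c : ℕ)) (mem_univ s)
    have eh := add_sum_erase _ (fun c => (h c : ℕ)) (mem_univ s)
    unfold valSum at hS
    omega
  funext c
  by_cases hc : c = s
  · exact hc ▸ Fin.ext hs
  · exact hoff c hc

end ValSum

variable {n : ℕ} [NeZero n]

def markedCoord (g : Fin n → Fin n) : Fin n := Fin.ofNat n (valSum g)

def markedVertex (g : Fin n → Fin n) : Fin n → Fin n × Bool :=
  fun c => (g c, decide (c = markedCoord g))

def sortKey (g : Fin n → Fin n) : ℕ ×ₗ Lex (Fin n → Fin n) :=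
  toLex (valSum g, toLex (update g (markedCoord g) 0))

theorem markedCoord_eq_iff {g h : Fin n → Fin n} :
    markedCoord g = markedCoord h ↔ valSum g ≡ valSum h [MOD n] := by
  simp [markedCoord, Fin.ext_iff, Nat.ModEq]

theorem markedVertex_injective : Injective (markedVertex (n := n)) := fun _ _ hgh =>
  funext fun c => congrArg Prod.fst (congrFun hgh c)

theorem sortKey_injective : Injective (sortKey (n := n)) := by
  intro g h hgh
  simp only [sortKey, toLex_inj, Prod.mk.injEq] at hgh
  obtain ⟨hS, hu⟩ := hgh
  rw [← show markedCoord g = markedCoord h from congrArg (Fin.ofNat n) hS] at hu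
  exact eq_of_update_eq_of_valSum_eq hu hS

theorem dORpow_markedVertex_of_sortKey_lt {g h : Fin n → Fin n}
    (hlt : sortKey g < sortKey h) :
    dORpow (dMycielskianCore (transTournament n)) n (markedVertex g) (markedVertex h) := by
  suffices ∃ c, g c < h c ∧ (c ≠ markedCoord g ∨ c ≠ markedCoord h) by
    obtain ⟨c, hgh, hc⟩ := this
    exact ⟨c, hgh, by simpa [markedVertex] using hc⟩
  rcases Prod.Lex.toLex_lt_toLex.mp hlt with hS | ⟨hS, hlex⟩
  · change valSum g < valSum h at hS
    by_cases hm : markedCoord g = markedCoord h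
    · obtain ⟨c, hc, hgh⟩ :=
        exists_ne_lt_of_valSum_lt_of_modEq hS (markedCoord_eq_iff.mp hm) (markedCoord g)
      exact ⟨c, hgh, .inl hc⟩
    · obtain ⟨c, -, hgh⟩ := exists_lt_of_sum_lt hS
      exact ⟨c, hgh, not_and_or.mp fun ⟨hcg, hch⟩ => hm (hcg ▸ hch)⟩
  · change valSum g = valSum h at hS
    change toLex (update g (markedCoord g) 0) < toLex (update h (markedCoord h) 0) at hlex
    rw [← show markedCoord g = markedCoord h from congrArg (Fin.ofNat n) hS] at hlex
    obtain ⟨c, -, hc⟩ := hlex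
    have hcm : c ≠ markedCoord g := by rintro rfl; simp at hc
    exact ⟨c, by simpa [update_of_ne hcm] using hc, .inl hcm⟩

end MycielskiORPower

open MycielskiORPower

/-- In the `n`-th OR-power of `M(T_n) ∖ {z}` there is a transitive clique of size `n^n`
every vertex of which has a coordinate in `V(T_n) × {1}`. -/
theorem transClique_in_dORpow_mycielskianCore (n : ℕ) (hn : 1 ≤ n) :
    ∃ f : Fin (n ^ n) → (Fin n → Fin n × Bool),
      IsTransClique (dORpow (dMycielskianCore (transTournament n)) n) (n ^ n) f ∧
      ∀ i, ∃ c, (f i c).2 = true := by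
  have : NeZero n := ⟨by omega⟩
  obtain ⟨f, hf⟩ := exists_isTransClique_comp_of_injective
    (by simp : Fintype.card (Fin n → Fin n) = n ^ n) markedVertex_injective sortKey_injective
    fun _ _ => dORpow_markedVertex_of_sortKey_lt
  exact ⟨markedVertex ∘ f, hf, fun i => ⟨markedCoord (f i), by simp [markedVertex]⟩⟩
end

section
/- For the transitive tournament T_n on n ≥ 2 vertices, the transitive clique number of the n-th OR-power of its Mycielskian satisfies ω_tr([M(T_n)]^n) ≥ n^n + 1, and consequently the Sperner capacity satisfies C_Sp(M(T_n)) ≥ (n^n+1)^(1/n) > n. -/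
/-! ### Auxiliary lemmas -/

private lemma radix2 {B a b x y : ℕ} (ha : a < B) (hb : b < B)
    (h : a + B * x = b + B * y) : a = b ∧ x = y := by
  rcases lt_trichotomy x y with hxy | hxy | hxy
  · have h2 : B * (x + 1) ≤ B * y := Nat.mul_le_mul_left _ (Nat.succ_le_of_lt hxy)
    rw [Nat.mul_succ] at h2
    omega
  · subst hxy; omega
  · have h2 : B * (y + 1) ≤ B * x := Nat.mul_le_mul_left _ (Nat.succ_le_of_lt hxy)
    rw [Nat.mul_succ] at h2
    omega

private lemma digitsLt {B : ℕ} (hB : 0 < B) : ∀ (k : ℕ) (d : Fin k → ℕ),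
    (∀ i, d i < B) → (∑ i, d i * B ^ (i : ℕ)) < B ^ k := by
  intro k
  induction k with
  | zero => intro d _; simp
  | succ k ih =>
    intro d hd
    rw [Fin.sum_univ_succ]
    simp only [Fin.val_zero, pow_zero, mul_one, Fin.val_succ]
    have h1 : ∑ i : Fin k, d i.succ * B ^ ((i : ℕ) + 1)
        = B * ∑ i : Fin k, d i.succ * B ^ (i : ℕ) := by
      rw [Finset.mul_sum]
      refine Finset.sum_congr rfl fun i _ => ?_
      rw [pow_succ]; ring
    rw [h1]
    have h2 := ih (fun i => d i.succ) (fun i => hd i.succ)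
    have h4 : B * ((∑ i : Fin k, d i.succ * B ^ (i : ℕ)) + 1) ≤ B * B ^ k :=
      Nat.mul_le_mul_left _ (Nat.succ_le_of_lt h2)
    rw [Nat.mul_succ] at h4
    have h5 : B ^ (k + 1) = B * B ^ k := by rw [pow_succ]; ring
    have h3 := hd 0
    omega

private lemma digitsInj {B : ℕ} : ∀ (k : ℕ) (d e : Fin k → ℕ),
    (∀ i, d i < B) → (∀ i, e i < B) →
    (∑ i, d i * B ^ (i : ℕ)) = (∑ i, e i * B ^ (i : ℕ)) → ∀ i, d i = e i := by
  intro k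
  induction k with
  | zero => intro d e _ _ _ i; exact i.elim0
  | succ k ih =>
    intro d e hd he h
    rw [Fin.sum_univ_succ, Fin.sum_univ_succ] at h
    simp only [Fin.val_zero, pow_zero, mul_one, Fin.val_succ] at h
    have hrw : ∀ (f : Fin (k + 1) → ℕ), ∑ i : Fin k, f i.succ * B ^ ((i : ℕ) + 1)
        = B * ∑ i : Fin k, f i.succ * B ^ (i : ℕ) := by
      intro f
      rw [Finset.mul_sum]
      refine Finset.sum_congr rfl fun i _ => ?_
      rw [pow_succ]; ring
    rw [hrw d, hrw e] at h
    have h2 := radix2 (hd 0) (he 0) h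
    intro i
    refine Fin.cases ?_ (fun i' => ?_) i
    · exact h2.1
    · exact ih (fun i => d i.succ) (fun i => e i.succ) (fun i => hd _) (fun i => he _) h2.2 i'

private lemma exists_clique {X W : Type*} [Fintype W] (Dx : X → X → Prop) {m : ℕ}
    (hm : Fintype.card W = m) (K : W → ℕ) (hK : Function.Injective K)
    (Ψ : W → X) (hΨ : Function.Injective Ψ)
    (harc : ∀ w w', K w < K w' → Dx (Ψ w) (Ψ w')) :
    ∃ f : Fin m → X, IsTransClique Dx m f := by
  classical
  have hcard : (Finset.univ.image K).card = m := by
    rw [Finset.card_image_of_injective _ hK, Finset.card_univ, hm]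
  set e := (Finset.univ.image K).orderIsoOfFin hcard with he
  have hmem : ∀ i : Fin m, ∃ w : W, K w = (e i : ℕ) := by
    intro i
    rcases Finset.mem_image.mp (e i).2 with ⟨w, _, hw⟩
    exact ⟨w, hw⟩
  choose F hF using hmem
  refine ⟨Ψ ∘ F, ?_, ?_⟩
  · intro i j hij
    have hF' : F i = F j := hΨ hij
    have hv : (e i : ℕ) = (e j : ℕ) := by rw [← hF i, ← hF j, hF']
    exact e.injective (Subtype.ext hv)
  · intro i j hij
    have hv : (e i : ℕ) < (e j : ℕ) := Subtype.coe_lt_coe.mpr (e.strictMono hij)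
    exact harc _ _ (by rw [hF i, hF j]; exact hv)

/-! ### The construction -/

private def vS {n : ℕ} (u : Fin n → Fin n) : ℕ := ∑ j, (u j : ℕ)

private def vI {n : ℕ} (hn : 0 < n) (u : Fin n → Fin n) : Fin n :=
  ⟨vS u % n, Nat.mod_lt _ hn⟩

private def vCode {n : ℕ} (u : Fin n → Fin n) : ℕ := ∑ j, (u j : ℕ) * n ^ (j : ℕ)

private def vK0 {n : ℕ} (hn : 0 < n) : Option (Fin n → Fin n) → ℕ
  | none => 0
  | some u => 1 + vCode u + n ^ n * ((n - 1 - (u (vI hn u) : ℕ)) + n * vS u)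

private def vPsi {n : ℕ} (hn : 0 < n) : Option (Fin n → Fin n) →
    Fin n → (Fin n × Bool ⊕ Unit)
  | none => fun _ => Sum.inr ()
  | some u => fun j => Sum.inl (u j, decide (j = vI hn u))

private lemma vCode_lt {n : ℕ} (hn : 0 < n) (u : Fin n → Fin n) : vCode u < n ^ n :=
  digitsLt hn n (fun j => (u j : ℕ)) (fun j => (u j).isLt)

private lemma vS_le {n : ℕ} (u : Fin n → Fin n) : vS u ≤ n * (n - 1) := by
  calc vS u ≤ ∑ _j : Fin n, (n - 1) :=
        Finset.sum_le_sum (fun j _ => by have := (u j).isLt; omega)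
  _ = n * (n - 1) := by simp [Finset.sum_const, Finset.card_univ, mul_comm]

private def vBnd (n : ℕ) : ℕ := n ^ n * (n + n * (n * (n - 1))) + 1

private lemma vK0_lt_Bnd {n : ℕ} (hn : 0 < n) (w : Option (Fin n → Fin n)) :
    vK0 hn w < vBnd n := by
  cases w with
  | none => simp only [vK0, vBnd]; omega
  | some u =>
    have h1 := vCode_lt hn u
    have h2 : (n - 1 - (u (vI hn u) : ℕ)) ≤ n - 1 := Nat.sub_le _ _
    have h3 : n * vS u ≤ n * (n * (n - 1)) := Nat.mul_le_mul_left _ (vS_le u)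
    have h4 : (n - 1 - (u (vI hn u) : ℕ)) + n * vS u + 1 ≤ n + n * (n * (n - 1)) := by omega
    have h5 : n ^ n * ((n - 1 - (u (vI hn u) : ℕ)) + n * vS u + 1)
        ≤ n ^ n * (n + n * (n * (n - 1))) := Nat.mul_le_mul_left _ h4
    rw [Nat.mul_succ] at h5
    simp only [vK0, vBnd]
    linarith

private lemma vK0_lt_of_S {n : ℕ} (hn : 0 < n) {u v : Fin n → Fin n} (h : vS u < vS v) :
    vK0 hn (some u) < vK0 hn (some v) := by
  have h1 := vCode_lt hn u
  have h2 : (n - 1 - (u (vI hn u) : ℕ)) ≤ n - 1 := Nat.sub_le _ _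
  have h3 : n * (vS u + 1) ≤ n * vS v := Nat.mul_le_mul_left _ h
  rw [Nat.mul_succ] at h3
  have key : (n - 1 - (u (vI hn u) : ℕ)) + n * vS u + 1 ≤ n * vS v := by omega
  have m1 : n ^ n * ((n - 1 - (u (vI hn u) : ℕ)) + n * vS u + 1) ≤ n ^ n * (n * vS v) :=
    Nat.mul_le_mul_left _ key
  rw [Nat.mul_succ] at m1
  have m2 : n ^ n * (n * vS v) ≤ n ^ n * ((n - 1 - (v (vI hn v) : ℕ)) + n * vS v) :=
    Nat.mul_le_mul_left _ (Nat.le_add_left _ _)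
  simp only [vK0]
  linarith

private lemma vK0_lt_of_sec {n : ℕ} (hn : 0 < n) {u v : Fin n → Fin n}
    (hS : vS u = vS v)
    (hsec : (n - 1 - (u (vI hn u) : ℕ)) < (n - 1 - (v (vI hn v) : ℕ))) :
    vK0 hn (some u) < vK0 hn (some v) := by
  have h1 := vCode_lt hn u
  have m1 : n ^ n * ((n - 1 - (u (vI hn u) : ℕ)) + n * vS u + 1)
      ≤ n ^ n * ((n - 1 - (v (vI hn v) : ℕ)) + n * vS v) :=
    Nat.mul_le_mul_left _ (by rw [hS]; omega)
  rw [Nat.mul_succ] at m1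
  simp only [vK0]
  linarith

private lemma vK0_inj {n : ℕ} (hn : 0 < n) : Function.Injective (vK0 (n := n) hn) := by
  intro w w' h
  match w, w' with
  | none, none => rfl
  | none, some u => simp only [vK0] at h; omega
  | some u, none => simp only [vK0] at h; omega
  | some u, some v =>
    simp only [vK0] at h
    have h1 := vCode_lt hn u
    have h2 := vCode_lt hn v
    have h3 := radix2 h1 h2 (by linarith :
      vCode u + n ^ n * ((n - 1 - (u (vI hn u) : ℕ)) + n * vS u)
        = vCode v + n ^ n * ((n - 1 - (v (vI hn v) : ℕ)) + n * vS v))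
    have h4 : ∀ j : Fin n, (u j : ℕ) = (v j : ℕ) :=
      digitsInj n _ _ (fun j => (u j).isLt) (fun j => (v j).isLt) h3.1
    exact congrArg some (funext fun j => Fin.ext (h4 j))

private lemma vPsi_inj {n : ℕ} (hn : 0 < n) : Function.Injective (vPsi (n := n) hn) := by
  intro w w' h
  match w, w' with
  | none, none => rfl
  | none, some u => exact absurd (congrFun h ⟨0, hn⟩) (by simp [vPsi])
  | some u, none => exact absurd (congrFun h ⟨0, hn⟩) (by simp [vPsi])
  | some u, some v =>
    refine congrArg some (funext fun j => ?_)
    have h2 := congrFun h j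
    simp only [vPsi, Sum.inl.injEq, Prod.mk.injEq] at h2
    exact h2.1

private lemma vArc {n : ℕ} (h0 : 0 < n) (w w' : Option (Fin n → Fin n))
    (h : vK0 h0 w < vK0 h0 w') :
    ∃ j, dMycielskian (transTournament n) (vPsi h0 w j) (vPsi h0 w' j) := by
  match w, w' with
  | none, none => exact absurd h (lt_irrefl _)
  | some u, none => exact absurd h (by simp [vK0])
  | none, some u =>
    refine ⟨vI h0 u, ?_⟩
    simp [vPsi, dMycielskian]
  | some u, some v =>
    by_contra hbad
    push_neg at hbad
    have hb : ∀ j, u j < v j → j = vI h0 u ∧ j = vI h0 v := by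
      intro j hj
      have hj' := hbad j
      simp only [vPsi, dMycielskian, transTournament, decide_eq_false_iff_not,
        not_and, not_or, not_not] at hj'
      exact hj' hj
    have huv : u ≠ v := fun e => absurd h (by rw [e]; exact lt_irrefl _)
    by_cases hex : ∃ j, u j < v j
    · obtain ⟨j1, hj1⟩ := hex
      obtain ⟨e1, e2⟩ := hb j1 hj1
      have hI : vI h0 u = vI h0 v := by rw [← e1, ← e2]
      have hui : u (vI h0 u) < v (vI h0 u) := e1 ▸ hj1
      have hother : ∀ j, j ≠ vI h0 u → (v j : ℕ) ≤ (u j : ℕ) := by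
        intro j hj
        by_contra hlt
        push_neg at hlt
        exact hj (hb j (Fin.lt_def.mpr hlt)).1
      have hSu : vS u = (u (vI h0 u) : ℕ) + ∑ j ∈ Finset.univ.erase (vI h0 u), (u j : ℕ) :=
        (Finset.add_sum_erase _ _ (Finset.mem_univ _)).symm
      have hSv : vS v = (v (vI h0 u) : ℕ) + ∑ j ∈ Finset.univ.erase (vI h0 u), (v j : ℕ) :=
        (Finset.add_sum_erase _ _ (Finset.mem_univ _)).symm
      have hrest : ∑ j ∈ Finset.univ.erase (vI h0 u), (v j : ℕ)
          ≤ ∑ j ∈ Finset.univ.erase (vI h0 u), (u j : ℕ) :=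
        Finset.sum_le_sum fun j hj => hother j (Finset.ne_of_mem_erase hj)
      have hmod : vS u % n = vS v % n := by
        have := congrArg Fin.val hI
        simpa [vI] using this
      have huival : (u (vI h0 u) : ℕ) < (v (vI h0 u) : ℕ) := Fin.lt_def.mp hui
      have hvival : (v (vI h0 u) : ℕ) < n := (v (vI h0 u)).isLt
      rcases lt_trichotomy (vS u) (vS v) with hlt | heq | hgt
      · have hdvd : n ∣ vS v - vS u := (Nat.modEq_iff_dvd' (le_of_lt hlt)).mp hmod
        have hge : n ≤ vS v - vS u := Nat.le_of_dvd (by omega) hdvd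
        omega
      · have hsec : (n - 1 - (v (vI h0 v) : ℕ)) < (n - 1 - (u (vI h0 u) : ℕ)) := by
          rw [← hI]
          omega
        exact absurd h (not_lt.mpr (le_of_lt (vK0_lt_of_sec h0 heq.symm hsec)))
      · exact absurd h (not_lt.mpr (le_of_lt (vK0_lt_of_S h0 hgt)))
    · push_neg at hex
      obtain ⟨j0, hj0⟩ : ∃ j0, v j0 < u j0 := by
        by_contra hcon
        push_neg at hcon
        exact huv (funext fun j => le_antisymm (hcon j) (hex j))
      have hlt : vS v < vS u :=
        Finset.sum_lt_sum (fun j _ => Fin.le_def.mp (hex j))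
          ⟨j0, Finset.mem_univ j0, Fin.lt_def.mp hj0⟩
      exact absurd h (not_lt.mpr (le_of_lt (vK0_lt_of_S h0 hlt)))

private lemma main_clique (n k t : ℕ) (h0 : 0 < n) (ht : t = k * n) :
    (n ^ n + 1) ^ k ≤ transCliqueNum (dORpow (dMycielskian (transTournament n)) t) := by
  classical
  have hcardW : Fintype.card (Fin k → Option (Fin n → Fin n)) = (n ^ n + 1) ^ k := by
    rw [Fintype.card_fun, Fintype.card_option, Fintype.card_fun]
    simp
  set B := vBnd n with hBdef
  set K : (Fin k → Option (Fin n → Fin n)) → ℕ :=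
    fun w => ∑ i, vK0 h0 (w i) * B ^ (i : ℕ) with hKdef
  have hKd : ∀ (w : Fin k → Option (Fin n → Fin n)) (i : Fin k), vK0 h0 (w i) < B :=
    fun w i => vK0_lt_Bnd h0 (w i)
  have hKinj : Function.Injective K := by
    intro w w' he
    funext i
    exact vK0_inj h0 (digitsInj k _ _ (hKd w) (hKd w') he i)
  set E : Fin t ≃ Fin k × Fin n := (finCongr ht).trans finProdFinEquiv.symm with hE
  set Ψ : (Fin k → Option (Fin n → Fin n)) → (Fin t → (Fin n × Bool ⊕ Unit)) :=
    fun w j => vPsi h0 (w (E j).1) (E j).2 with hΨdef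
  have hΨinj : Function.Injective Ψ := by
    intro w w' he
    funext i
    apply vPsi_inj h0
    funext j2
    have h2 := congrFun he (E.symm (i, j2))
    simpa [hΨdef, Equiv.apply_symm_apply] using h2
  have harc : ∀ w w', K w < K w' →
      dORpow (dMycielskian (transTournament n)) t (Ψ w) (Ψ w') := by
    intro w w' hlt
    have hex : ∃ i, vK0 h0 (w i) < vK0 h0 (w' i) := by
      by_contra hcon
      push_neg at hcon
      have hle : K w' ≤ K w :=
        Finset.sum_le_sum fun i _ => Nat.mul_le_mul_right _ (hcon i)
      exact absurd hlt (not_lt.mpr hle)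
    obtain ⟨i, hi⟩ := hex
    obtain ⟨j2, hj2⟩ := vArc h0 _ _ hi
    refine ⟨E.symm (i, j2), ?_⟩
    simpa [hΨdef, Equiv.apply_symm_apply] using hj2
  obtain ⟨f, hf⟩ := exists_clique _ hcardW K hKinj Ψ hΨinj harc
  apply le_csSup
  · refine ⟨Fintype.card (Fin t → (Fin n × Bool ⊕ Unit)), ?_⟩
    rintro m ⟨g, hg⟩
    have hle := Fintype.card_le_of_injective g hg.1
    simpa using hle
  · exact ⟨f, hf⟩

open Filter in
/-- `ω_tr([M(T_n)]^n) ≥ n^n + 1`, and consequently the Sperner capacity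
`C_Sp(M(T_n))` (the limit of `ω_tr(D^t)^(1/t)`, bundled as a `Tendsto` hypothesis)
satisfies `C_Sp(M(T_n)) ≥ (n^n+1)^(1/n) > n`, for every `n ≥ 2`. -/
theorem spernerCapacity_mycielskian_transTournament (n : ℕ) (hn : 2 ≤ n) (c : ℝ)
    (hc : Tendsto
      (fun t : ℕ =>
        (transCliqueNum (dORpow (dMycielskian (transTournament n)) t) : ℝ) ^ ((1 : ℝ) / t))
      atTop (nhds c)) :
    n ^ n + 1 ≤ transCliqueNum (dORpow (dMycielskian (transTournament n)) n) ∧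
    ((n : ℝ) ^ n + 1) ^ ((1 : ℝ) / n) ≤ c ∧
    (n : ℝ) < ((n : ℝ) ^ n + 1) ^ ((1 : ℝ) / n) := by
  have h0 : 0 < n := by omega
  have hn0R : (0 : ℝ) < (n : ℝ) := by exact_mod_cast h0
  have part1 : n ^ n + 1 ≤ transCliqueNum (dORpow (dMycielskian (transTournament n)) n) := by
    have h := main_clique n 1 n h0 (by omega)
    simpa using h
  have hmR : (0 : ℝ) < (n : ℝ) ^ n + 1 := by positivity
  refine ⟨part1, ?_, ?_⟩
  · -- limit part
    have hmono : ∀ k : ℕ, ((n : ℝ) ^ n + 1) ^ ((1 : ℝ) / n) ≤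
        (transCliqueNum (dORpow (dMycielskian (transTournament n)) ((k + 1) * n)) : ℝ)
          ^ ((1 : ℝ) / (((k + 1) * n : ℕ) : ℝ)) := by
      intro k
      have hge := main_clique n (k + 1) ((k + 1) * n) h0 rfl
      have hcast : (((n ^ n + 1) ^ (k + 1) : ℕ) : ℝ) = ((n : ℝ) ^ n + 1) ^ (k + 1) := by
        push_cast; ring
      have step1 : ((n : ℝ) ^ n + 1) ^ (k + 1)
          ≤ (transCliqueNum (dORpow (dMycielskian (transTournament n)) ((k + 1) * n)) : ℝ) := by
        rw [← hcast]
        exact_mod_cast hge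
      have hposT : (0 : ℝ) < (((k + 1) * n : ℕ) : ℝ) := by
        have : 0 < (k + 1) * n := by positivity
        exact_mod_cast this
      have step2 : (((n : ℝ) ^ n + 1) ^ (k + 1)) ^ ((1 : ℝ) / (((k + 1) * n : ℕ) : ℝ))
          ≤ (transCliqueNum (dORpow (dMycielskian (transTournament n)) ((k + 1) * n)) : ℝ)
            ^ ((1 : ℝ) / (((k + 1) * n : ℕ) : ℝ)) :=
        Real.rpow_le_rpow (by positivity) step1 (by positivity)
      have key : (((n : ℝ) ^ n + 1) ^ (k + 1)) ^ ((1 : ℝ) / (((k + 1) * n : ℕ) : ℝ))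
          = ((n : ℝ) ^ n + 1) ^ ((1 : ℝ) / (n : ℝ)) := by
        rw [← Real.rpow_natCast ((n : ℝ) ^ n + 1) (k + 1), ← Real.rpow_mul (le_of_lt hmR)]
        congr 1
        have hk1 : ((k : ℝ) + 1) ≠ 0 := by positivity
        have hnne : (n : ℝ) ≠ 0 := ne_of_gt hn0R
        push_cast
        field_simp
      rw [key] at step2
      exact step2
    have hg : Tendsto (fun k : ℕ => (k + 1) * n) atTop atTop := by
      apply Filter.tendsto_atTop_mono (f := id) (fun k => ?_) Filter.tendsto_id
      calc k ≤ (k + 1) * 1 := by omega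
      _ ≤ (k + 1) * n := Nat.mul_le_mul_left _ h0
    have hc2 := hc.comp hg
    exact ge_of_tendsto' hc2 (fun k => by simpa using hmono k)
  · -- strict inequality
    have hnne : (n : ℝ) ≠ 0 := ne_of_gt hn0R
    have base : (n : ℝ) = ((n : ℝ) ^ n) ^ ((1 : ℝ) / n) := by
      rw [← Real.rpow_natCast (n : ℝ) n, ← Real.rpow_mul (le_of_lt hn0R)]
      rw [mul_one_div, div_self (by exact_mod_cast (by omega : n ≠ 0)), Real.rpow_one]
    have hstep : ((n : ℝ) ^ n) ^ ((1 : ℝ) / n) < ((n : ℝ) ^ n + 1) ^ ((1 : ℝ) / n) :=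
      Real.rpow_lt_rpow (by positivity) (by linarith) (by positivity)
    linarith [base, hstep]
end

section
/- If D is a digraph attaining its Sperner capacity in finite length, i.e., C_Sp(D) = ω_tr(D^k)^(1/k) for some positive integer k, then C_Sp(M(D)) > C_Sp(D). -/
open Filter Function

lemma pow_rpow_one_div_mul {x : ℝ} (hx : 0 ≤ x) {a : ℕ} (ha : a ≠ 0) (T : ℕ) :
    (x ^ a) ^ ((1 : ℝ) / (a * T : ℕ)) = x ^ ((1 : ℝ) / T) := by
  have hsplit : (1 : ℝ) / (a * T : ℕ) = (a : ℝ)⁻¹ * (1 / T) := by push_cast; field_simp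
  rw [hsplit, Real.rpow_mul (by positivity), Real.pow_rpow_inv_natCast hx ha]

section TransClique

variable {X : Type*} (E : X → X → Prop)

lemma bddAbove_transCliqueSizes [Fintype X] :
    BddAbove {m | ∃ f : Fin m → X, IsTransClique E m f} :=
  ⟨Fintype.card X, fun m ⟨f, hf, _⟩ => by simpa using Fintype.card_le_of_injective f hf⟩

lemma isTransClique_zero : IsTransClique E 0 Fin.elim0 :=
  ⟨fun i => i.elim0, fun i => i.elim0⟩

lemma exists_isTransClique_transCliqueNum [Fintype X] :
    ∃ f : Fin (transCliqueNum E) → X, IsTransClique E _ f :=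
  Nat.sSup_mem (s := {m | ∃ f : Fin m → X, IsTransClique E m f}) ⟨0, Fin.elim0, isTransClique_zero E⟩
    (bddAbove_transCliqueSizes E)

lemma card_le_transCliqueNum [Fintype X] {I L : Type*} [Fintype I] [LinearOrder L]
    (u : I → X) (key : I → L) (hu : Injective u) (hkey : Injective key)
    (harc : ∀ a b, key a < key b → E (u a) (u b)) :
    Fintype.card I ≤ transCliqueNum E := by
  let : LinearOrder I := LinearOrder.lift' key hkey
  let e := Fintype.orderIsoFinOfCardEq I rfl
  exact le_csSup (bddAbove_transCliqueSizes E)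
    ⟨u ∘ e, hu.comp e.injective, fun i j hij => harc _ _ (e.strictMono hij)⟩

lemma transCliqueNum_le_of_map {Y : Type*} [Fintype Y] {F : Y → Y → Prop} (φ : X → Y)
    (hφ : Injective φ) (harc : ∀ x y, E x y → F (φ x) (φ y)) :
    transCliqueNum E ≤ transCliqueNum F :=
  csSup_le_csSup (bddAbove_transCliqueSizes F) ⟨0, Fin.elim0, isTransClique_zero E⟩
    fun _ ⟨f, hf, hfE⟩ => ⟨φ ∘ f, hφ.comp hf, fun i j h => harc _ _ (hfE i j h)⟩

lemma transCliqueNum_pow_le [Fintype X] (a : ℕ) :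
    transCliqueNum E ^ a ≤ transCliqueNum (dORpow E a) := by
  obtain ⟨f, hf, hfE⟩ := exists_isTransClique_transCliqueNum E
  refine (card_le_transCliqueNum (dORpow E a) (fun v => f ∘ v) toLex hf.comp_left
    toLex.injective ?_).trans_eq' (by simp)
  rintro v w ⟨i, -, hi⟩
  exact ⟨i, hfE _ _ hi⟩

lemma transCliqueNum_dORpow_dORpow_le [Fintype X] (s a : ℕ) :
    transCliqueNum (dORpow (dORpow E s) a) ≤ transCliqueNum (dORpow E (a * s)) := by
  refine transCliqueNum_le_of_map _
    ((Equiv.curry _ _ _).symm.trans (finProdFinEquiv.arrowCongr (Equiv.refl X)))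
    (Equiv.injective _) ?_
  rintro g g' ⟨p, c, h⟩
  exact ⟨finProdFinEquiv (p, c), by simpa using h⟩

lemma rpow_transCliqueNum_le_of_tendsto [Fintype X] {C : ℝ}
    (hC : Tendsto (fun t : ℕ => (transCliqueNum (dORpow E t) : ℝ) ^ ((1 : ℝ) / t))
      atTop (nhds C)) {T : ℕ} (hT : 0 < T) :
    (transCliqueNum (dORpow E T) : ℝ) ^ ((1 : ℝ) / T) ≤ C := by
  have hsub : Tendsto (fun a : ℕ => a * T) atTop atTop :=
    tendsto_atTop_mono (fun a => Nat.le_mul_of_pos_right a hT) tendsto_id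
  refine ge_of_tendsto (hC.comp hsub) (eventually_atTop.2 ⟨1, fun a ha => ?_⟩)
  have hpow : transCliqueNum (dORpow E T) ^ a ≤ transCliqueNum (dORpow E (a * T)) :=
    (transCliqueNum_pow_le _ a).trans (transCliqueNum_dORpow_dORpow_le E T a)
  calc (transCliqueNum (dORpow E T) : ℝ) ^ ((1 : ℝ) / T)
      = ((transCliqueNum (dORpow E T) : ℝ) ^ a) ^ ((1 : ℝ) / (a * T : ℕ)) :=
        (pow_rpow_one_div_mul (by positivity) (by omega) T).symm
    _ ≤ _ := Real.rpow_le_rpow (by positivity) (by exact_mod_cast hpow) (by positivity)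

end TransClique

open OrderDual

namespace Word

variable {m n : ℕ}

def weight (w : Fin m → Fin n) : ℕ := ∑ i, (w i : ℕ)

def marker [NeZero m] (w : Fin m → Fin n) : Fin m := Fin.ofNat m (weight w)

def key [NeZero m] (w : Fin m → Fin n) : ℕ ×ₗ ((Fin n)ᵒᵈ ×ₗ Lex (Fin m → Fin n)) :=
  toLex (weight w, toLex (toDual (w (marker w)), toLex w))

lemma weight_le_add_of_le_of_ne {w w' : Fin m → Fin n} {p : Fin m}
    (h : ∀ q ≠ p, w' q ≤ w q) : weight w' ≤ weight w + w' p := by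
  classical
  have hrest : ∑ q ∈ Finset.univ.erase p, (w' q : ℕ) ≤ ∑ q ∈ Finset.univ.erase p, (w q : ℕ) :=
    Finset.sum_le_sum fun q hq => h q (Finset.ne_of_mem_erase hq)
  have hw := Finset.add_sum_erase Finset.univ (fun q => (w q : ℕ)) (Finset.mem_univ p)
  have hw' := Finset.add_sum_erase Finset.univ (fun q => (w' q : ℕ)) (Finset.mem_univ p)
  simp only [weight] at hw hw' ⊢
  omega

lemma eq_of_le_of_weight_eq {w w' : Fin m → Fin n} (h : ∀ q, w' q ≤ w q)
    (hweight : weight w = weight w') : w = w' := by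
  have := (Finset.sum_eq_sum_iff_of_le fun q _ => Fin.val_le_of_le (h q)).1 hweight.symm
  exact funext fun q => Fin.ext (this q (Finset.mem_univ q)).symm

lemma marker_eq_iff [NeZero m] {w w' : Fin m → Fin n} :
    marker w = marker w' ↔ weight w ≡ weight w' [MOD m] := by
  simp [marker, Fin.ext_iff, Nat.ModEq]

/-- For equal weights the tie-break on the letter at the common marker does the work; for unequal
weights with the same marker, the weights differ by at least `m ≥ n`, more than one letter can
make up. -/
theorem exists_lt_and_ne_marker_of_key_lt [NeZero m] (hnm : n ≤ m) {w w' : Fin m → Fin n}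
    (h : key w < key w') : ∃ p, w p < w' p ∧ (p ≠ marker w ∨ p ≠ marker w') := by
  by_contra! hcon
  have hle : ∀ q ≠ marker w, w' q ≤ w q := fun q hq => not_lt.1 fun hlt => hq (hcon q hlt).1
  rcases Prod.Lex.toLex_lt_toLex.1 h with hlt | ⟨heq, htie⟩ <;> dsimp only at *
  · by_cases hμ : marker w = marker w'
    · have hdvd : m ∣ weight w' - weight w :=
        (Nat.modEq_iff_dvd' hlt.le).1 (marker_eq_iff.1 hμ)
      have := Nat.le_of_dvd (Nat.sub_pos_of_lt hlt) hdvd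
      have := weight_le_add_of_le_of_ne hle
      have := (w' (marker w)).isLt
      omega
    · obtain ⟨p, -, hp⟩ := Finset.exists_lt_of_sum_lt hlt
      exact hμ ((hcon p hp).1.symm.trans (hcon p hp).2)
  · have hμ : marker w = marker w' := marker_eq_iff.2 (congrArg (· % m) heq)
    have hp : w' (marker w) ≤ w (marker w) := by
      rw [← hμ] at htie
      rcases Prod.Lex.toLex_lt_toLex.1 htie with hlt | ⟨heq', -⟩
      · exact (toDual_lt_toDual.1 hlt).le
      · exact (toDual_inj.1 heq').ge
    have hww : w = w' := eq_of_le_of_weight_eq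
      (fun q => if hq : q = marker w then hq ▸ hp else hle q hq) heq
    subst hww
    exact lt_irrefl _ h

end Word

section Mycielskian

variable {V : Type*} {k n m : ℕ} [NeZero m]

def wordVertex (f : Fin n → Fin k → V) :
    Option (Fin m → Fin n) → Fin m → Fin k → V × Bool ⊕ Unit
  | none => fun _ _ => Sum.inr ()
  | some w => fun p c => Sum.inl (f (w p) c, decide (p = Word.marker w))

def wordVertexKey : Option (Fin m → Fin n) → WithBot (ℕ ×ₗ ((Fin n)ᵒᵈ ×ₗ Lex (Fin m → Fin n)))
  | none => ⊥
  | some w => Word.key w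

lemma wordVertexKey_injective : Injective (wordVertexKey (m := m) (n := n)) := by
  rintro (_ | w) (_ | w') h <;> simp_all [wordVertexKey, Word.key]

lemma wordVertex_injective (hk : 0 < k) {f : Fin n → Fin k → V} (hf : Injective f) :
    Injective (wordVertex (m := m) f) := by
  rintro (_ | w) (_ | w') h
  · rfl
  · simpa [wordVertex] using congrFun (congrFun h 0) ⟨0, hk⟩
  · simpa [wordVertex] using congrFun (congrFun h 0) ⟨0, hk⟩
  · congr 1
    funext p
    refine hf (funext fun c => ?_)
    have hpc := congrFun (congrFun h p) c
    simp only [wordVertex, Sum.inl.injEq, Prod.mk.injEq] at hpc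
    exact hpc.1

theorem add_one_le_transCliqueNum_mycielskian [Fintype V] (D : V → V → Prop) (hk : 0 < k)
    (hnm : n ≤ m) {f : Fin n → Fin k → V} (hf : IsTransClique (dORpow D k) n f) :
    n ^ m + 1 ≤ transCliqueNum (dORpow (dORpow (dMycielskian D) k) m) := by
  refine (card_le_transCliqueNum _ (wordVertex f) wordVertexKey (wordVertex_injective hk hf.1)
    wordVertexKey_injective ?_).trans_eq' (by simp)
  rintro (_ | w) (_ | w') h
  · exact absurd h (lt_irrefl _)
  · exact ⟨Word.marker w', ⟨0, hk⟩, by simp [wordVertex, dMycielskian]⟩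
  · exact absurd h not_lt_bot
  · obtain ⟨p, hp, hmark⟩ := Word.exists_lt_and_ne_marker_of_key_lt hnm (WithBot.coe_lt_coe.1 h)
    obtain ⟨c, hc⟩ := hf.2 _ _ hp
    exact ⟨p, c, by simpa [wordVertex, dMycielskian, hc] using hmark⟩

end Mycielskian

open Filter in
theorem spernerCapacity_mycielskian_gt_general {V : Type*} [Fintype V] (D : V → V → Prop)
    (c cM : ℝ)
    (hcM : Tendsto
      (fun t : ℕ => (transCliqueNum (dORpow (dMycielskian D) t) : ℝ) ^ ((1 : ℝ) / t))
      atTop (nhds cM))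
    (k : ℕ) (hk : 1 ≤ k)
    (hfin : c = (transCliqueNum (dORpow D k) : ℝ) ^ ((1 : ℝ) / k)) :
    c < cM := by
  obtain ⟨f, hf⟩ := exists_isTransClique_transCliqueNum (dORpow D k)
  set n := transCliqueNum (dORpow D k)
  set m := max n 1
  have : NeZero m := ⟨by positivity⟩
  have hclique : n ^ m + 1 ≤ transCliqueNum (dORpow (dMycielskian D) (m * k)) :=
    (add_one_le_transCliqueNum_mycielskian D hk (le_max_left n 1) hf).trans
      (transCliqueNum_dORpow_dORpow_le _ k m)
  calc c = ((n : ℝ) ^ m) ^ ((1 : ℝ) / (m * k : ℕ)) := by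
        rw [hfin, pow_rpow_one_div_mul (by positivity) (NeZero.ne m)]
    _ < ((n : ℝ) ^ m + 1) ^ ((1 : ℝ) / (m * k : ℕ)) :=
        Real.rpow_lt_rpow (by positivity) (lt_add_one _) (by positivity)
    _ ≤ (transCliqueNum (dORpow (dMycielskian D) (m * k)) : ℝ) ^ ((1 : ℝ) / (m * k : ℕ)) :=
        Real.rpow_le_rpow (by positivity) (by exact_mod_cast hclique) (by positivity)
    _ ≤ cM := rpow_transCliqueNum_le_of_tendsto _ hcM (Nat.mul_pos (by positivity) hk)

open Filter in
/-- If a digraph `D` attains its Sperner capacity `C_Sp(D)` (the limit of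
`ω_tr(D^t)^(1/t)`, bundled as a `Tendsto` hypothesis) in finite length, i.e.
`C_Sp(D) = ω_tr(D^k)^(1/k)` for some positive integer `k`, then
`C_Sp(M(D)) > C_Sp(D)`. -/
theorem spernerCapacity_mycielskian_gt {V : Type*} [Fintype V] (D : V → V → Prop)
    (c cM : ℝ)
    (hc : Tendsto (fun t : ℕ => (transCliqueNum (dORpow D t) : ℝ) ^ ((1 : ℝ) / t))
      atTop (nhds c))
    (hcM : Tendsto
      (fun t : ℕ => (transCliqueNum (dORpow (dMycielskian D) t) : ℝ) ^ ((1 : ℝ) / t))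
      atTop (nhds cM))
    (k : ℕ) (hk : 1 ≤ k)
    (hfin : c = (transCliqueNum (dORpow D k) : ℝ) ^ ((1 : ℝ) / k)) :
    c < cM :=
  spernerCapacity_mycielskian_gt_general D c cM hcM k hk hfin
end

section
/- For n ≥ 3 and r ≥ 3 and any positive integer t, there is no clique of size n^t in the t-th OR-power of M_r(K_n) with the top vertex removed such that every vertex of the clique has a coordinate in V(K_n)×{r−1}. -/
/-- The `r`-level generalized Mycielskian of `G` with the top vertex removed: the induced
subgraph of `M_r(G)` on `V(G) × {0,…,r−1}`, where `(v,i)` and `(w,j)` are adjacent iff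
`vw ∈ E(G)` and either `i = j = 0` or the levels `i`, `j` are consecutive. -/
def genMycielskianCore {V : Type*} (G : SimpleGraph V) (r : ℕ) :
    SimpleGraph (V × Fin r) where
  Adj x y := G.Adj x.1 y.1 ∧
    (((x.2 : ℕ) = 0 ∧ (y.2 : ℕ) = 0) ∨ (y.2 : ℕ) = (x.2 : ℕ) + 1 ∨ (x.2 : ℕ) = (y.2 : ℕ) + 1)
  symm := ⟨fun _ _ h => ⟨h.1.symm, by tauto⟩⟩
  loopless := ⟨fun _ h => G.loopless.irrefl _ h.1⟩

/-- For `n, r ≥ 3` and any `t ≥ 1`, there is no clique of size `n^t` in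
`[M_r(K_n) ∖ {z}]^t` every vertex of which has a coordinate in `V(K_n) × {r−1}`. -/
theorem no_clique_in_ORpow_genMycielskianCore (n r t : ℕ)
    (hn : 3 ≤ n) (hr : 3 ≤ r) (ht : 1 ≤ t) :
    ¬ ∃ S : Finset (Fin t → Fin n × Fin r),
        (ORpow (genMycielskianCore (SimpleGraph.completeGraph (Fin n)) r) t).IsNClique (n ^ t) S ∧
        ∀ x ∈ S, ∃ i, ((x i).2 : ℕ) = r - 1 := by
  rintro ⟨S, ⟨hclique, hcard⟩, htop⟩
  set f : (Fin t → Fin n × Fin r) → (Fin t → Fin n) := fun x i => (x i).1 with hf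
  have hinj : Set.InjOn f S := by
    intro x hx y hy hxy
    by_contra hne
    obtain ⟨j, hadj⟩ := hclique hx hy hne
    exact hadj.1 (congrFun hxy j)
  have himg : S.image f = Finset.univ := by
    apply Finset.eq_univ_of_card
    rw [Finset.card_image_of_injOn hinj, hcard]
    simp [Fintype.card_fun]
  have hsurj : ∀ g : Fin t → Fin n, ∃ x ∈ S, f x = g := by
    intro g
    have : g ∈ S.image f := himg ▸ Finset.mem_univ g
    simpa using this
  have hS : S.Nonempty := Finset.card_pos.mp (by rw [hcard]; positivity)
  obtain ⟨x, hx⟩ := hS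
  obtain ⟨i, hxi⟩ := htop x hx
  have hcardc : 1 < (({(x i).1}ᶜ : Finset (Fin n))).card := by
    rw [Finset.card_compl]; simp; omega
  obtain ⟨a, haS, b, hbS, hab⟩ := Finset.one_lt_card.mp hcardc
  rw [Finset.mem_compl, Finset.mem_singleton] at haS hbS
  obtain ⟨y, hyS, hy⟩ := hsurj (Function.update (f x) i a)
  obtain ⟨y', hy'S, hy'⟩ := hsurj (Function.update (f x) i b)
  -- helper facts
  have key : ∀ c : Fin n, c ≠ (x i).1 → ∀ z ∈ S, f z = Function.update (f x) i c →
      ((z i).2 : ℕ) = r - 2 := by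
    intro c hc z hzS hz
    have hzx : z ≠ x := by
      intro h; subst h
      have := congrFun hz i
      simp [Function.update_self] at this
      exact hc this.symm
    obtain ⟨j, hadj⟩ := hclique hzS hx hzx
    have hji : j = i := by
      by_contra hji
      have : f z j = f x j := by rw [hz, Function.update_of_ne hji]
      exact hadj.1 this
    rw [hji] at hadj
    have h1 := hadj.2
    have h2 : ((z i).2 : ℕ) < r := (z i).2.isLt
    omega
  have hyi := key a haS y hyS hy
  have hy'i := key b hbS y' hy'S hy'
  have hne : y ≠ y' := by
    intro h; subst h
    have h1 := congrFun hy i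
    have h2 := congrFun hy' i
    rw [h1] at h2
    simp [Function.update_self] at h2
    exact hab h2
  obtain ⟨j, hadj⟩ := hclique hyS hy'S hne
  have hji : j = i := by
    by_contra hji
    have : f y j = f y' j := by
      rw [hy, hy', Function.update_of_ne hji, Function.update_of_ne hji]
    exact hadj.1 this
  rw [hji] at hadj
  have := hadj.2
  omega
end

section
/- For every real t ≥ 2, the cubic equation x³ + (t−3)x² + (3−2t−t²)x + (−t³+5t²−3t−1) = 0 has the three real solutions x_k = (4t/3)·cos((1/3)·arccos(1 − 27/(4t) + 27/(4t²)) − 2πk/3) − t/3 + 1 for k = 0,1,2. -/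
open Real

/-- Factorization identity for the cubic, with abstract `c, s, r` satisfying the
Pythagorean, `√3`, and triple-angle constraints. -/
lemma cubic_factor_aux (t x c s r : ℝ) (hpyth : s ^ 2 = 1 - c ^ 2) (hr : r ^ 2 = 3)
    (htrip : 4 * t ^ 2 * (4 * c ^ 3 - 3 * c) = 4 * t ^ 2 - 27 * t + 27) :
    x ^ 3 + (t - 3) * x ^ 2 + (3 - 2 * t - t ^ 2) * x + (-t ^ 3 + 5 * t ^ 2 - 3 * t - 1)
      = (x - (4 * t / 3 * c - t / 3 + 1))
        * (x - (4 * t / 3 * (-(1 / 2) * c + r / 2 * s) - t / 3 + 1))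
        * (x - (4 * t / 3 * (-(1 / 2) * c - r / 2 * s) - t / 3 + 1)) := by
  linear_combination (4 * t / 27) * htrip
    + ((4 * t ^ 2 / 3) * x + (4 * t ^ 3 - 16 * t ^ 3 * c - 12 * t ^ 2) / 9) * hpyth
    + (s ^ 2 * ((4 * t ^ 2 / 9) * x + (4 * t ^ 3 - 16 * t ^ 3 * c - 12 * t ^ 2) / 27)) * hr

/-- For `t ≥ 2`, the real solutions of the cubic
`x³ + (t−3)x² + (3−2t−t²)x + (−t³+5t²−3t−1) = 0` are exactly the three values
`x_k = (4t/3)·cos((1/3)·arccos(1 − 27/(4t) + 27/(4t²)) − 2πk/3) − t/3 + 1`, `k = 0,1,2`. -/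
theorem cubic_roots_trig (t : ℝ) (ht : 2 ≤ t) (x : ℝ) :
    x ^ 3 + (t - 3) * x ^ 2 + (3 - 2 * t - t ^ 2) * x + (-t ^ 3 + 5 * t ^ 2 - 3 * t - 1) = 0 ↔
    ∃ k : Fin 3,
      x = 4 * t / 3 *
            Real.cos (1 / 3 * Real.arccos (1 - 27 / (4 * t) + 27 / (4 * t ^ 2))
              - 2 * Real.pi * (k : ℝ) / 3)
          - t / 3 + 1 := by
  have ht0 : (0:ℝ) < t := by linarith
  have ht' : t ≠ 0 := ne_of_gt ht0
  set C : ℝ := 1 - 27 / (4 * t) + 27 / (4 * t ^ 2) with hCdef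
  have hCle : C ≤ 1 := by
    have h1 : 27 / (4 * t ^ 2) ≤ 27 / (4 * t) := by
      apply div_le_div_of_nonneg_left (by norm_num) (by positivity)
      nlinarith
    simp only [hCdef]; linarith
  have hCge : -1 ≤ C := by
    have h2 : C + 1 = (8 * t ^ 2 - 27 * t + 27) / (4 * t ^ 2) := by
      rw [hCdef]; field_simp; ring
    have h3 : (0:ℝ) ≤ (8 * t ^ 2 - 27 * t + 27) / (4 * t ^ 2) :=
      div_nonneg (by nlinarith [sq_nonneg (16 * t - 27)]) (by positivity)
    have h4 : (0:ℝ) ≤ C + 1 := h2 ▸ h3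
    linarith
  set c : ℝ := Real.cos (1 / 3 * Real.arccos C) with hc
  set s : ℝ := Real.sin (1 / 3 * Real.arccos C) with hs
  have hpyth : s ^ 2 = 1 - c ^ 2 := by rw [hs, hc, Real.sin_sq]
  have hr : (Real.sqrt 3) ^ 2 = 3 := Real.sq_sqrt (by norm_num)
  have htrip : 4 * t ^ 2 * (4 * c ^ 3 - 3 * c) = 4 * t ^ 2 - 27 * t + 27 := by
    have h3 : Real.cos (3 * (1 / 3 * Real.arccos C)) = C := by
      rw [show 3 * (1 / 3 * Real.arccos C) = Real.arccos C by ring,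
        Real.cos_arccos hCge hCle]
    rw [Real.cos_three_mul, ← hc] at h3
    rw [hCdef] at h3
    field_simp at h3
    nlinarith [h3, sq_nonneg t]
  -- the three cosines, with real-number indices
  have hk0 : Real.cos (1 / 3 * Real.arccos C - 2 * π * (0 : ℝ) / 3) = c := by
    norm_num [hc]
  have hk1 : Real.cos (1 / 3 * Real.arccos C - 2 * π * (1 : ℝ) / 3)
      = -(1 / 2) * c + Real.sqrt 3 / 2 * s := by
    have h : (2 : ℝ) * π * (1 : ℝ) / 3 = π - π / 3 := by ring
    rw [h, Real.cos_sub, Real.cos_pi_sub, Real.sin_pi_sub, Real.cos_pi_div_three,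
      Real.sin_pi_div_three, ← hc, ← hs]
    ring
  have hk2 : Real.cos (1 / 3 * Real.arccos C - 2 * π * (2 : ℝ) / 3)
      = -(1 / 2) * c - Real.sqrt 3 / 2 * s := by
    have h : (2 : ℝ) * π * (2 : ℝ) / 3 = π / 3 + π := by ring
    rw [h, Real.cos_sub, Real.cos_add_pi, Real.sin_add_pi, Real.cos_pi_div_three,
      Real.sin_pi_div_three, ← hc, ← hs]
    ring
  have cast0 : (((0 : Fin 3) : ℕ) : ℝ) = 0 := by norm_num
  have cast1 : (((1 : Fin 3) : ℕ) : ℝ) = 1 := by norm_num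
  have cast2 : (((2 : Fin 3) : ℕ) : ℝ) = 2 := by norm_num
  have hfact := cubic_factor_aux t x c s (Real.sqrt 3) hpyth hr htrip
  constructor
  · intro h
    rw [hfact] at h
    rcases mul_eq_zero.1 h with h' | h2
    · rcases mul_eq_zero.1 h' with h0 | h1
      · exact ⟨0, by rw [cast0, hk0]; linarith [sub_eq_zero.1 h0]⟩
      · exact ⟨1, by rw [cast1, hk1]; linarith [sub_eq_zero.1 h1]⟩
    · exact ⟨2, by rw [cast2, hk2]; linarith [sub_eq_zero.1 h2]⟩
  · rintro ⟨k, rfl⟩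
    have hkv : ((k : ℕ) : ℝ) = 0 ∨ ((k : ℕ) : ℝ) = 1 ∨ ((k : ℕ) : ℝ) = 2 := by
      fin_cases k <;> norm_num
    rcases hkv with hkv | hkv | hkv <;> rw [hkv]
    · rw [hk0]
      linear_combination cubic_factor_aux t (4 * t / 3 * c - t / 3 + 1) c s (Real.sqrt 3)
        hpyth hr htrip
    · rw [hk1]
      linear_combination cubic_factor_aux t
        (4 * t / 3 * (-(1 / 2) * c + Real.sqrt 3 / 2 * s) - t / 3 + 1) c s (Real.sqrt 3)
        hpyth hr htrip
    · rw [hk2]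
      linear_combination cubic_factor_aux t
        (4 * t / 3 * (-(1 / 2) * c - Real.sqrt 3 / 2 * s) - t / 3 + 1) c s (Real.sqrt 3)
        hpyth hr htrip
end

section
/- For every real t ≥ 2 and k ∈ {1,2}, the value (4t/3)·cos((1/3)·arccos(1 − 27/(4t) + 27/(4t²)) − 2πk/3) − t/3 + 1 is at most 1. -/
/-!
Write `x = 1 - 27/(4t) + 27/(4t²)`, so that `x + 11/16 = 27 (t - 2)² / (16t²) ≥ 0` and
`x ≤ 1`. The number `y = cos((arccos x - 2πk)/3)` is a root of the Chebyshev cubic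
`4y³ - 3y = x`, and for `k ∈ {1, 2}` its angle lies in `[π/3, 5π/3]` up to sign, so `y ≤ 1/2`.
On `[-1/2, 1/2]` the cubic `4y³ - 3y` is decreasing and takes the value `-11/16` at `y = 1/4`;
hence `x ≥ -11/16` forces `y ≤ 1/4`, which is exactly `(4t/3) y - t/3 + 1 ≤ 1`.
-/

open Real

lemma le_of_chebyshev_three_le {a y : ℝ} (ha : -(1 / 2) ≤ a) (ha' : a ≤ 1 / 2)
    (hy : y ≤ 1 / 2) (h : 4 * a ^ 3 - 3 * a ≤ 4 * y ^ 3 - 3 * y) : y ≤ a := by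
  by_contra! hay
  have hslope : 4 * (y ^ 2 + y * a + a ^ 2) < 3 := by
    nlinarith [mul_nonneg (sub_nonneg.2 hy) (neg_le_iff_add_nonneg.1 ha)]
  have hfactor : 4 * y ^ 3 - 3 * y - (4 * a ^ 3 - 3 * a)
      = (y - a) * (4 * (y ^ 2 + y * a + a ^ 2) - 3) := by
    ring
  nlinarith [mul_pos (sub_pos.2 hay) (sub_pos.2 hslope)]

lemma cos_le_half_of_mem_Icc {α : ℝ} (h₁ : π / 3 ≤ α) (h₂ : α ≤ 5 * π / 3) : cos α ≤ 1 / 2 := by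
  rw [← cos_pi_div_three]
  rcases le_total α π with hα | hα
  · exact cos_le_cos_of_nonneg_of_le_pi (by positivity) hα h₁
  · rw [← cos_two_pi_sub]
    exact cos_le_cos_of_nonneg_of_le_pi (by positivity) (by linarith) (by linarith)

lemma chebyshev_three_cos_trisect_arccos {x : ℝ} (hx₁ : -1 ≤ x) (hx₂ : x ≤ 1) (k : ℕ) :
    4 * cos (1 / 3 * arccos x - 2 * π * k / 3) ^ 3 - 3 * cos (1 / 3 * arccos x - 2 * π * k / 3)
      = x := by
  rw [← cos_three_mul,
    show 3 * (1 / 3 * arccos x - 2 * π * k / 3) = arccos x - k * (2 * π) by ring,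
    cos_sub_nat_mul_two_pi, cos_arccos hx₁ hx₂]

lemma neg_eleven_div_sixteen_le (t : ℝ) : -(11 / 16) ≤ 1 - 27 / (4 * t) + 27 / (4 * t ^ 2) := by
  rcases eq_or_ne t 0 with rfl | ht
  · norm_num
  have hsq :
      1 - 27 / (4 * t) + 27 / (4 * t ^ 2) + 11 / 16 = 27 * (t - 2) ^ 2 / (16 * t ^ 2) := by
    field_simp
    ring
  have : 0 ≤ 27 * (t - 2) ^ 2 / (16 * t ^ 2) := by positivity
  linarith

lemma one_sub_div_add_div_sq_le_one {t : ℝ} (ht : 1 ≤ t) :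
    1 - 27 / (4 * t) + 27 / (4 * t ^ 2) ≤ 1 := by
  have : 27 / (4 * t ^ 2) ≤ 27 / (4 * t) :=
    div_le_div_of_nonneg_left (by norm_num) (by positivity) (by nlinarith)
  linarith

/-- For `t ≥ 2` and `k ∈ {1,2}`, the root
`(4t/3)·cos((1/3)·arccos(1 − 27/(4t) + 27/(4t²)) − 2πk/3) − t/3 + 1` is at most `1`. -/
theorem cubic_other_roots_le_one (t : ℝ) (ht : 2 ≤ t) (k : ℕ) (hk : k = 1 ∨ k = 2) :
    4 * t / 3 *
        Real.cos (1 / 3 * Real.arccos (1 - 27 / (4 * t) + 27 / (4 * t ^ 2))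
          - 2 * Real.pi * (k : ℝ) / 3)
      - t / 3 + 1 ≤ 1 := by
  set x := 1 - 27 / (4 * t) + 27 / (4 * t ^ 2)
  set y := cos (1 / 3 * arccos x - 2 * π * k / 3)
  have hx₁ : -(11 / 16) ≤ x := neg_eleven_div_sixteen_le t
  have hx₂ : x ≤ 1 := one_sub_div_add_div_sq_le_one (by linarith)
  have hk₁ : (1 : ℝ) ≤ k := by rcases hk with rfl | rfl <;> norm_num
  have hk₂ : (k : ℝ) ≤ 2 := by rcases hk with rfl | rfl <;> norm_num
  have hy_half : y ≤ 1 / 2 := by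
    have h := cos_le_half_of_mem_Icc (α := 2 * π * k / 3 - 1 / 3 * arccos x)
      (by nlinarith [arccos_le_pi x, pi_pos]) (by nlinarith [arccos_nonneg x, pi_pos])
    rwa [← cos_neg, neg_sub] at h
  have hy_root : 4 * y ^ 3 - 3 * y = x := chebyshev_three_cos_trisect_arccos (by linarith) hx₂ k
  have hy_quarter : y ≤ 1 / 4 :=
    le_of_chebyshev_three_le (by norm_num) (by norm_num) hy_half (by linarith)
  nlinarith
end

section
/- For every real t ≥ 2, the root m(t) := (4t/3)·cos((1/3)·arccos(1 − 27/(4t) + 27/(4t²))) − t/3 + 1 of the cubic x³ + (t−3)x² + (3−2t−t²)x + (−t³+5t²−3t−1) = 0 satisfies t < m(t) ≤ t + 1. -/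
/-!
Shifting `x = y - t/3 + 1` depresses the cubic to `y³ - (4t²/3) y - (16t³/27) z = 0` with
`z = 1 - 27/(4t) + 27/(4t²) ∈ [-1, 1]`, so Viète's substitution `y = (4t/3) c`, `4c³ - 3c = z`,
solved by `c = cos(arccos z / 3)`, gives the root `m`. Since `arccos z / 3 ∈ [0, π/3]`,
`1/2 ≤ c ≤ 1`; `c ≤ 1` is `m ≤ t + 1`. For `t < m`: the cubic takes the value `-1` at `x = t`,
and its difference quotient between `t` and `m` is positive once `m ≥ t/3 + 1`, i.e. `c ≥ 1/2`.
-/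

open Real

namespace CubicMainRoot

noncomputable def trigArg (t : ℝ) : ℝ := 1 - 27 / (4 * t) + 27 / (4 * t ^ 2)

def cubic (t x : ℝ) : ℝ :=
  x ^ 3 + (t - 3) * x ^ 2 + (3 - 2 * t - t ^ 2) * x + (-t ^ 3 + 5 * t ^ 2 - 3 * t - 1)

lemma cubic_self (t : ℝ) : cubic t t = -1 := by
  unfold cubic; ring

lemma cubic_sub_cubic (t x y : ℝ) :
    cubic t x - cubic t y =
      (x - y) * (x ^ 2 + x * y + y ^ 2 + (t - 3) * (x + y) + (3 - 2 * t - t ^ 2)) := by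
  unfold cubic; ring

lemma cubic_trig_root {t c : ℝ} (ht : t ≠ 0)
    (hc : 4 * c ^ 3 - 3 * c = trigArg t) :
    cubic t (4 * t / 3 * c - t / 3 + 1) = 0 := by
  have hc' : 4 * t ^ 2 * (4 * c ^ 3 - 3 * c) = 4 * t ^ 2 - 27 * t + 27 := by
    rw [hc, trigArg]; field_simp
  unfold cubic
  linear_combination (4 * t / 27) * hc'

lemma lt_of_cubic_eq_zero {t m : ℝ} (ht : 2 ≤ t) (hm : t / 3 + 1 ≤ m) (hroot : cubic t m = 0) :
    t < m := by
  have hdiff := cubic_sub_cubic t t m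
  rw [cubic_self, hroot] at hdiff
  by_contra! hle
  have hquot : 0 < t ^ 2 + t * m + m ^ 2 + (t - 3) * (t + m) + (3 - 2 * t - t ^ 2) := by
    nlinarith
  nlinarith [mul_nonneg (sub_nonneg.2 hle) hquot.le]

lemma cos_three_mul_cos_arccos_div_three {x : ℝ} (hx₁ : -1 ≤ x) (hx₂ : x ≤ 1) :
    4 * cos (1 / 3 * arccos x) ^ 3 - 3 * cos (1 / 3 * arccos x) = x := by
  rw [← cos_three_mul, ← mul_assoc, mul_one_div_cancel three_ne_zero, one_mul,
    cos_arccos hx₁ hx₂]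

lemma one_half_le_cos_arccos_div_three (x : ℝ) : 1 / 2 ≤ cos (1 / 3 * arccos x) := by
  rw [← cos_pi_div_three]
  apply cos_le_cos_of_nonneg_of_le_pi
  · have := arccos_nonneg x; positivity
  · linarith [pi_pos]
  · linarith [arccos_le_pi x]

lemma neg_one_le_trigArg {t : ℝ} (ht : t ≠ 0) : -1 ≤ trigArg t := by
  have hsum : trigArg t + 1 = (8 * t ^ 2 - 27 * t + 27) / (4 * t ^ 2) := by
    rw [trigArg]; field_simp; ring
  have : 0 ≤ (8 * t ^ 2 - 27 * t + 27) / (4 * t ^ 2) :=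
    div_nonneg (by nlinarith [sq_nonneg (4 * t - 27 / 4)]) (by positivity)
  linarith

lemma trigArg_le_one {t : ℝ} (ht : 1 ≤ t) : trigArg t ≤ 1 := by
  rw [trigArg]
  have : 27 / (4 * t ^ 2) ≤ 27 / (4 * t) :=
    div_le_div_of_nonneg_left (by norm_num) (by positivity) (by nlinarith)
  linarith

end CubicMainRoot

open CubicMainRoot in
/-- For `t ≥ 2`, the value
`m(t) = (4t/3)·cos((1/3)·arccos(1 − 27/(4t) + 27/(4t²))) − t/3 + 1` is a root of the
cubic `x³ + (t−3)x² + (3−2t−t²)x + (−t³+5t²−3t−1)` and satisfies `t < m(t) ≤ t + 1`. -/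
theorem cubic_main_root_bounds (t : ℝ) (ht : 2 ≤ t) :
    let m := 4 * t / 3 *
        Real.cos (1 / 3 * Real.arccos (1 - 27 / (4 * t) + 27 / (4 * t ^ 2))) - t / 3 + 1
    m ^ 3 + (t - 3) * m ^ 2 + (3 - 2 * t - t ^ 2) * m + (-t ^ 3 + 5 * t ^ 2 - 3 * t - 1) = 0 ∧
    t < m ∧ m ≤ t + 1 := by
  intro m
  have ht₀ : t ≠ 0 := by positivity
  set c := cos (1 / 3 * arccos (trigArg t))
  have hroot : cubic t m = 0 :=
    cubic_trig_root ht₀ (cos_three_mul_cos_arccos_div_three (neg_one_le_trigArg ht₀)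
      (trigArg_le_one (by linarith)))
  have hm : m = 4 * t / 3 * c - t / 3 + 1 := rfl
  have hc₁ : 1 / 2 ≤ c := one_half_le_cos_arccos_div_three _
  have hc₂ : c ≤ 1 := cos_le_one _
  refine ⟨hroot, lt_of_cubic_eq_zero ht ?_ hroot, ?_⟩ <;> rw [hm] <;> nlinarith
end
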